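/- arXiv:2109.10203 — 6 statements merged into one kernel-verified Lean document; each statement's English description precedes it below -/
import Mathlib

section
/- Let (Γ,⊑) be an extended modular complex and p,q vertices. Let a be a gate of q at L^-_p, let b be a gate of q at L^+_p, and let m be a median of a,b,q. Then p∧m exists and equals a; p∨m exists and equals b; a ⊑ b (in particular p and m are ◇-neighbors); and if p ≠ q then m ≠ p. -/
namespace ZeroExt

variable {V : Type*}

/-- The metric interval `I(x,y)` in a graph. -/
def interval (G : SimpleGraph V) (x y : V) : Set V :=
  {z | G.dist x z + G.dist z y = G.dist x y}

/-- `m` is a median of `x, y, z`. -/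
def IsMedian (G : SimpleGraph V) (x y z m : V) : Prop :=
  m ∈ interval G x y ∧ m ∈ interval G y z ∧ m ∈ interval G x z

/-- A graph is modular if every triple of vertices has a median. -/
def Modular (G : SimpleGraph V) : Prop :=
  ∀ x y z : V, ∃ m : V, IsMedian G x y z m

/-- `(a,b,c)` is a shortest subpath. -/
def ShortestTriple (G : SimpleGraph V) (a b c : V) : Prop :=
  G.dist a b + G.dist b c = G.dist a c

/-- `(a,b,c,d)` is a shortest subpath. -/
def ShortestQuad (G : SimpleGraph V) (a b c d : V) : Prop :=
  G.dist a b + G.dist b c + G.dist c d = G.dist a d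

/-- `(x1,x2,x3,x4)` is an isometric rectangle. -/
def IsoRect (G : SimpleGraph V) (x1 x2 x3 x4 : V) : Prop :=
  ShortestTriple G x4 x1 x2 ∧ ShortestTriple G x1 x2 x3 ∧
    ShortestTriple G x2 x3 x4 ∧ ShortestTriple G x3 x4 x1

/-- A set of vertices is convex if it contains the interval of each pair of its points. -/
def Convex (G : SimpleGraph V) (U : Set V) : Prop :=
  ∀ x ∈ U, ∀ y ∈ U, interval G x y ⊆ U

/-- `g` is a gate of `q` at `U`. -/
def IsGate (G : SimpleGraph V) (U : Set V) (q g : V) : Prop :=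
  g ∈ U ∧ ∀ u ∈ U, G.dist q u = G.dist q g + G.dist g u

/-- A 4-cycle in a graph. -/
def IsFourCycle (G : SimpleGraph V) (x1 x2 x3 x4 : V) : Prop :=
  G.Adj x1 x2 ∧ G.Adj x2 x3 ∧ G.Adj x3 x4 ∧ G.Adj x4 x1 ∧ x1 ≠ x3 ∧ x2 ≠ x4

/-- A modular complex: a finite connected modular graph together with an
acyclic admissible edge orientation. -/
structure ModularComplex (V : Type*) [Fintype V] where
  G : SimpleGraph V
  connected : G.Connected
  modular : Modular G
  ori : V → V → Prop
  ori_adj : ∀ {x y : V}, ori x y → G.Adj x y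
  ori_total : ∀ {x y : V}, G.Adj x y → ori x y ∨ ori y x
  acyclic : ∀ {x y : V}, Relation.ReflTransGen ori x y → Relation.ReflTransGen ori y x → x = y
  admissible : ∀ {x1 x2 x3 x4 : V}, IsFourCycle G x1 x2 x3 x4 → ori x1 x2 → ori x4 x3

variable [Fintype V]

/-- The partial order `⪯` induced by the orientation. -/
def ModularComplex.le (Γ : ModularComplex V) : V → V → Prop :=
  Relation.ReflTransGen Γ.ori

/-- The order interval `[p,q]`. -/
def ModularComplex.Icc (Γ : ModularComplex V) (p q : V) : Set V :=
  {x | Γ.le p x ∧ Γ.le x q}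

/-- `m` is the greatest lower bound `p ∧ q`. -/
def ModularComplex.IsMeet (Γ : ModularComplex V) (p q m : V) : Prop :=
  Γ.le m p ∧ Γ.le m q ∧ ∀ x : V, Γ.le x p → Γ.le x q → Γ.le x m

/-- `j` is the least upper bound `p ∨ q`. -/
def ModularComplex.IsJoin (Γ : ModularComplex V) (p q j : V) : Prop :=
  Γ.le p j ∧ Γ.le q j ∧ ∀ x : V, Γ.le p x → Γ.le q x → Γ.le j x

/-- `(p,q)` is a Boolean pair. -/
def ModularComplex.BooleanPair (Γ : ModularComplex V) (p q : V) : Prop :=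
  ∃ (k : ℕ) (φ : Finset (Fin k) → V), Function.Injective φ ∧
    φ ∅ = p ∧ φ Finset.univ = q ∧
    ∀ (S : Finset (Fin k)) (i : Fin k), i ∉ S → Γ.ori (φ S) (φ (insert i S))

/-- An extended modular complex: a modular complex with an admissible relation `⊑`. -/
structure ExtendedModularComplex (V : Type*) [Fintype V] extends ModularComplex V where
  sq : V → V → Prop
  sq_le : ∀ {p q : V}, sq p q → toModularComplex.le p q
  sq_refl : ∀ p : V, sq p p
  sq_edge : ∀ {p q : V}, ori p q → sq p q
  sq_interval : ∀ {p q a b : V}, sq p q → toModularComplex.le a b →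
    a ∈ toModularComplex.Icc p q → b ∈ toModularComplex.Icc p q → sq a b
  sq_join : ∀ {p q1 q2 j : V}, sq p q1 → sq p q2 → toModularComplex.IsJoin q1 q2 j → sq p j
  sq_meet : ∀ {p1 p2 q m : V}, sq p1 q → sq p2 q → toModularComplex.IsMeet p1 p2 m → sq m q

/-- `L^+_p = {x : p ⊑ x}`. -/
def ExtendedModularComplex.Lpos (Γ : ExtendedModularComplex V) (p : V) : Set V :=
  {x | Γ.sq p x}

/-- `L^-_p = {x : x ⊑ p}`. -/
def ExtendedModularComplex.Lneg (Γ : ExtendedModularComplex V) (p : V) : Set V :=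
  {x | Γ.sq x p}

/-- `p, q` are ◇-neighbors. -/
def ExtendedModularComplex.DiamondNb (Γ : ExtendedModularComplex V) (p q : V) : Prop :=
  ∃ a b : V, Γ.sq a b ∧ p ∈ Γ.Icc a b ∧ q ∈ Γ.Icc a b

/-- The thickening `Δ(Γ)`. -/
def ExtendedModularComplex.thick (Γ : ExtendedModularComplex V) : SimpleGraph V where
  Adj p q := p ≠ q ∧ Γ.DiamondNb p q
  symm := by
    constructor
    rintro p q ⟨hne, a, b, hab, hp, hq⟩
    exact ⟨hne.symm, a, b, hab, hq, hp⟩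
  loopless := by constructor; rintro p ⟨hne, -⟩; exact hne rfl


/-!
The gate `a` of `q` at `L^-_p` is seen metrically: whenever `m` lies between `a` and `q`,
`a` lies between `m` and every `t ∈ L^-_p`. In a modular complex the metric interval
`I(x, y)` of a comparable pair `x ⪯ y` is the order interval `[x, y]`, and principal filters
and ideals are convex; together these make `a = p ∧ m`, and dually `b = p ∨ m`. Finally
`a ⊑ b` follows by induction along a directed path from `a` to `m`: for its last step
`y → m`, the median `w` of `p, y, b` is `p ∨ y`, so `a ⊑ w` by induction, and axioms (ii)
and (iii) lift this to `y ⊑ b` and then to `a = p ∧ y ⊑ b`.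
-/

section Graph

variable {α : Type*} {G : SimpleGraph α} {g m q t x y z w : α}

lemma mem_interval : z ∈ interval G x y ↔ G.dist x z + G.dist z y = G.dist x y := Iff.rfl

lemma mem_interval_comm : z ∈ interval G x y ↔ z ∈ interval G y x := by
  rw [mem_interval, mem_interval, G.dist_comm (u := x) (v := z), G.dist_comm (u := z) (v := y),
    G.dist_comm (u := x) (v := y)]
  constructor <;> intro <;> omega

lemma eq_of_mem_interval_self (hG : G.Connected) (h : z ∈ interval G x x) : z = x := by
  simp only [mem_interval, SimpleGraph.dist_self] at h
  exact (hG.dist_eq_zero_iff.mp (by omega)).symm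

lemma interval_subset_of_mem (hG : G.Connected) (h : y ∈ interval G x z) :
    interval G x y ⊆ interval G x z := by
  intro w hw
  simp only [mem_interval] at *
  have := hG.dist_triangle (u := w) (v := y) (w := z)
  have := hG.dist_triangle (u := x) (v := w) (w := z)
  omega

lemma mem_interval_of_mem_of_mem (hG : G.Connected) (hw : w ∈ interval G x y)
    (hy : y ∈ interval G x z) : y ∈ interval G w z := by
  simp only [mem_interval] at *
  have := hG.dist_triangle (u := w) (v := y) (w := z)
  have := hG.dist_triangle (u := x) (v := w) (w := z)
  omega

lemma exists_adj_mem_interval (hG : G.Connected) (h : x ≠ z) :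
    ∃ y, G.Adj x y ∧ y ∈ interval G x z := by
  obtain ⟨p, hp⟩ := hG.exists_walk_length_eq_dist x z
  cases p with
  | nil => exact absurd rfl h
  | @cons _ y _ hxy p =>
    refine ⟨y, hxy, ?_⟩
    have := SimpleGraph.dist_le p
    have := hG.dist_triangle (u := x) (v := y) (w := z)
    rw [mem_interval, SimpleGraph.dist_eq_one_iff_adj.mpr hxy] at *
    rw [SimpleGraph.Walk.length_cons] at hp
    omega

lemma eq_or_eq_of_mem_interval_of_adj (hG : G.Connected) (h : G.Adj x z)
    (hy : y ∈ interval G x z) : y = x ∨ y = z := by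
  simp only [mem_interval, SimpleGraph.dist_eq_one_iff_adj.mpr h] at hy
  rcases Nat.eq_zero_or_pos (G.dist x y) with h0 | h0
  · exact .inl (hG.dist_eq_zero_iff.mp h0).symm
  · exact .inr (hG.dist_eq_zero_iff.mp (by omega))

lemma IsGate.mem_interval_of_mem_interval (hG : G.Connected) {U : Set α} (hg : IsGate G U q g)
    (ht : t ∈ U) (hm : m ∈ interval G g q) : g ∈ interval G m t := by
  have hgt := hg.2 t ht
  simp only [mem_interval] at *
  have := hG.dist_triangle (u := q) (v := m) (w := t)
  have := hG.dist_triangle (u := m) (v := g) (w := t)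
  have := G.dist_comm (u := q) (v := g)
  have := G.dist_comm (u := q) (v := m)
  have := G.dist_comm (u := m) (v := g)
  omega

lemma IsGate.eq_of_mem_interval (hG : G.Connected) {U : Set α} (hg : IsGate G U q g)
    (hy : y ∈ U) (hy' : y ∈ interval G g q) : y = g :=
  (eq_of_mem_interval_self hG (hg.mem_interval_of_mem_interval hG hy hy')).symm

lemma interval_induction (hG : G.Connected) {P : α → Prop}
    (step : ∀ x x₁, P x → G.Adj x x₁ → x₁ ∈ interval G x y → P x₁)
    (hx : P x) (hz : z ∈ interval G x y) : P z := by
  induction hn : G.dist x z using Nat.strong_induction_on generalizing x with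
  | _ n ih =>
  by_cases hxz : x = z
  · exact hxz ▸ hx
  obtain ⟨x₁, hxx₁, hx₁⟩ := exists_adj_mem_interval hG hxz
  have hlt : G.dist x₁ z < n := by
    rw [mem_interval, G.dist_eq_one_iff_adj.mpr hxx₁] at hx₁
    omega
  exact ih _ hlt (step x x₁ hx hxx₁ (interval_subset_of_mem hG hz hx₁))
    (mem_interval_of_mem_of_mem hG hx₁ hz) rfl

lemma IsFourCycle.rotate (h : IsFourCycle G x y z w) : IsFourCycle G y z w x :=
  ⟨h.2.1, h.2.2.1, h.2.2.2.1, h.1, h.2.2.2.2.2, fun e => h.2.2.2.2.1 e.symm⟩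

namespace Modular

variable (hG : G.Connected) (hM : Modular G)
include hG hM

lemma mem_interval_or_mem_interval (h : G.Adj x z) (y : α) :
    x ∈ interval G z y ∨ z ∈ interval G x y := by
  obtain ⟨c, hxz, hzy, hxy⟩ := hM x z y
  rcases eq_or_eq_of_mem_interval_of_adj hG h hxz with rfl | rfl
  exacts [.inl hzy, .inr hxy]

lemma exists_isFourCycle {x₁ x₂ : α} (h₁ : G.Adj x x₁) (h₂ : G.Adj x x₂) (hne : x₁ ≠ x₂)
    (hx₁ : x₁ ∈ interval G x y) (hx₂ : x₂ ∈ interval G x y) :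
    ∃ c, IsFourCycle G x₁ x x₂ c ∧ c ∈ interval G x₁ y ∧ c ∈ interval G x₂ y := by
  rw [mem_interval, G.dist_eq_one_iff_adj.mpr h₁] at hx₁
  rw [mem_interval, G.dist_eq_one_iff_adj.mpr h₂] at hx₂
  have hx₁x₂ : G.dist x₁ x₂ = 2 := by
    have := hG.dist_triangle (u := x₁) (v := x) (w := x₂)
    have := G.dist_comm (u := x₁) (v := x)
    have := G.dist_eq_one_iff_adj.mpr h₁
    have := G.dist_eq_one_iff_adj.mpr h₂
    have hne₀ : G.dist x₁ x₂ ≠ 0 := fun h => hne (hG.dist_eq_zero_iff.mp h)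
    have hne₁ : G.dist x₁ x₂ ≠ 1 := fun h => by
      have hadj := G.dist_eq_one_iff_adj.mp h
      have := G.dist_eq_one_iff_adj.mpr hadj.symm
      rcases mem_interval_or_mem_interval hG hM hadj y with h' | h' <;>
        rw [mem_interval] at h' <;> omega
    omega
  obtain ⟨c, hc₁₂, hc₂, hc₁⟩ := hM x₁ x₂ y
  rw [mem_interval] at hc₁₂ hc₂ hc₁
  have := G.dist_comm (u := c) (v := x₂)
  have hx₁c : G.dist x₁ c = 1 := by omega
  have hx₂c : G.dist x₂ c = 1 := by omega
  have hxc : x ≠ c := by rintro rfl; omega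
  refine ⟨c, ⟨h₁.symm, h₂, G.dist_eq_one_iff_adj.mp hx₂c, (G.dist_eq_one_iff_adj.mp hx₁c).symm,
    hne, hxc⟩, ?_, ?_⟩ <;> rw [mem_interval] <;> omega

end Modular

end Graph

namespace ModularComplex

variable (Γ : ModularComplex V) {a b c m p u w x y z : V}

protected lemma le_refl (x : V) : Γ.le x x := Relation.ReflTransGen.refl

protected lemma le_trans (h₁ : Γ.le x y) (h₂ : Γ.le y z) : Γ.le x z :=
  Relation.ReflTransGen.trans h₁ h₂

lemma le_of_ori (h : Γ.ori x y) : Γ.le x y := Relation.ReflTransGen.single h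

lemma ori_of_le_of_adj (hle : Γ.le x y) (hadj : Γ.G.Adj x y) : Γ.ori x y :=
  (Γ.ori_total hadj).resolve_right fun h => hadj.ne (Γ.acyclic hle (Γ.le_of_ori h))

lemma dist_eq_add_one_of_le_of_ori (hab : Γ.le a b) (hbc : Γ.ori b c) :
    Γ.G.dist a c = Γ.G.dist a b + 1 := by
  induction hab generalizing c with
  | refl => simp [Γ.ori_adj hbc]
  | @tail b' b _ hb'b ih =>
    have hb := ih hb'b
    have hadj := Γ.ori_adj hbc
    rcases Modular.mem_interval_or_mem_interval Γ.connected Γ.modular hadj a with h | h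
    · rw [mem_interval, Γ.G.dist_comm.trans (Γ.G.dist_eq_one_iff_adj.mpr hadj),
        Γ.G.dist_comm (u := b), Γ.G.dist_comm (u := c)] at h
      omega
    · have hb'c : b' ≠ c := by
        rintro rfl
        exact hadj.ne (Γ.acyclic (Γ.le_of_ori hbc) (Γ.le_of_ori hb'b))
      have hb' : b' ∈ interval Γ.G b a := by
        rw [mem_interval, Γ.G.dist_comm, Γ.G.dist_eq_one_iff_adj.mpr (Γ.ori_adj hb'b),
          Γ.G.dist_comm (u := b'), Γ.G.dist_comm (u := b)]
        omega
      obtain ⟨w, hcyc, hw, -⟩ :=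
        Modular.exists_isFourCycle Γ.connected Γ.modular (Γ.ori_adj hb'b).symm hadj hb'c hb' h
      have hw' := ih (Γ.admissible hcyc.rotate hbc)
      rw [mem_interval, Γ.G.dist_eq_one_iff_adj.mpr hcyc.2.2.2.1.symm, Γ.G.dist_comm (u := w),
        Γ.G.dist_comm (u := b')] at hw
      omega

lemma mem_interval_of_le (hab : Γ.le a b) (hbc : Γ.le b c) : b ∈ interval Γ.G a c := by
  induction hbc with
  | refl => simp [mem_interval]
  | @tail c' c hbc' hc'c ih =>
    rw [mem_interval] at ih ⊢
    rw [Γ.dist_eq_add_one_of_le_of_ori (Γ.le_trans hab hbc') hc'c,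
      Γ.dist_eq_add_one_of_le_of_ori hbc' hc'c]
    omega

lemma ori_and_le_of_adj_of_mem_interval (hab : Γ.le a b) (hadj : Γ.G.Adj a y)
    (hy : y ∈ interval Γ.G a b) : Γ.ori a y ∧ Γ.le y b := by
  induction hab using Relation.ReflTransGen.head_induction_on generalizing y with
  | refl => exact absurd (eq_of_mem_interval_self Γ.connected hy) hadj.ne'
  | @head a a₁ haa₁ ha₁b ih =>
    by_cases hya₁ : y = a₁
    · subst hya₁
      exact ⟨haa₁, ha₁b⟩
    obtain ⟨c, hcyc, -, hc⟩ := Modular.exists_isFourCycle Γ.connected Γ.modular hadj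
      (Γ.ori_adj haa₁) hya₁ hy (Γ.mem_interval_of_le (Γ.le_of_ori haa₁) ha₁b)
    obtain ⟨ha₁c, hcb⟩ := ih hcyc.2.2.1 hc
    exact ⟨Γ.admissible hcyc.rotate.rotate ha₁c,
      Γ.le_trans (Γ.le_of_ori (Γ.admissible hcyc.rotate haa₁)) hcb⟩

lemma interval_subset_Icc (hab : Γ.le a b) : interval Γ.G a b ⊆ Γ.Icc a b := fun _ hz =>
  interval_induction Γ.connected (P := fun x => Γ.le a x ∧ Γ.le x b)
    (fun _ _ ⟨hax, hxb⟩ hadj hx₁ =>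
      have h := Γ.ori_and_le_of_adj_of_mem_interval hxb hadj hx₁
      ⟨Relation.ReflTransGen.tail hax h.1, h.2⟩)
    ⟨Γ.le_refl a, hab⟩ hz

lemma le_of_adj_of_mem_interval (hux : Γ.le u x) (huy : Γ.le u y) (hadj : Γ.G.Adj x z)
    (hz : z ∈ interval Γ.G x y) : Γ.le u z := by
  induction hn : Γ.G.dist x y using Nat.strong_induction_on generalizing u x z with
  | _ n ih =>
  -- Replace `u` by the median `g` of `x, y, u`, which lies on a geodesic from `x` to `y`.
  obtain ⟨g, hgxy, hgyu, hgxu⟩ := Γ.modular x y u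
  obtain ⟨hug, hgx⟩ := Γ.interval_subset_Icc hux (mem_interval_comm.mp hgxu)
  have hgy := (Γ.interval_subset_Icc huy (mem_interval_comm.mp hgyu)).2
  refine Γ.le_trans hug ?_
  rcases Γ.ori_total hadj with hxz | hzx
  · exact Γ.le_trans hgx (Γ.le_of_ori hxz)
  by_cases hxg : x = g
  · subst hxg
    exact (Γ.interval_subset_Icc hgy hz).1
  obtain ⟨x₁, hxx₁, hx₁⟩ := exists_adj_mem_interval Γ.connected hxg
  obtain ⟨hgx₁, hx₁x⟩ := Γ.interval_subset_Icc hgx (mem_interval_comm.mp hx₁)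
  by_cases hx₁z : x₁ = z
  · exact hx₁z ▸ hgx₁
  have hx₁y := interval_subset_of_mem Γ.connected hgxy hx₁
  obtain ⟨c, hcyc, hc, -⟩ :=
    Modular.exists_isFourCycle Γ.connected Γ.modular hxx₁ hadj hx₁z hx₁y hz
  have hcz : Γ.ori c z := Γ.admissible hcyc (Γ.ori_of_le_of_adj hx₁x hxx₁.symm)
  have hlt : Γ.G.dist x₁ y < n := by
    rw [mem_interval, Γ.G.dist_eq_one_iff_adj.mpr hxx₁] at hx₁y
    omega
  exact Γ.le_trans (ih _ hlt hgx₁ hgy hcyc.2.2.2.1.symm hc rfl) (Γ.le_of_ori hcz)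

lemma convex_setOf_le (u : V) : Convex Γ.G {z | Γ.le u z} := fun _ hux _ huy _ hz =>
  interval_induction Γ.connected (P := Γ.le u)
    (fun _ _ hux' hadj hx₁ => Γ.le_of_adj_of_mem_interval hux' huy hadj hx₁) hux hz

def dual : ModularComplex V where
  G := Γ.G
  connected := Γ.connected
  modular := Γ.modular
  ori x y := Γ.ori y x
  ori_adj h := (Γ.ori_adj h).symm
  ori_total h := (Γ.ori_total h).symm
  acyclic hxy hyx :=
    Γ.acyclic (Relation.reflTransGen_swap.mp hyx) (Relation.reflTransGen_swap.mp hxy)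
  admissible := fun ⟨h₁₂, h₂₃, h₃₄, h₄₁, h₁₃, h₂₄⟩ h =>
    Γ.admissible ⟨h₁₂.symm, h₄₁.symm, h₃₄.symm, h₂₃.symm, h₂₄, h₁₃⟩ h

lemma dual_le_iff : Γ.dual.le x y ↔ Γ.le y x := Relation.reflTransGen_swap

lemma convex_setOf_ge (u : V) : Convex Γ.G {z | Γ.le z u} := fun x hx y hy _ hz =>
  Γ.dual_le_iff.mp
    (Γ.dual.convex_setOf_le u x (Γ.dual_le_iff.mpr hx) y (Γ.dual_le_iff.mpr hy) hz)

lemma isJoin_of_isMedian (hpb : Γ.le p b) (hyb : Γ.le y b) (hw : IsMedian Γ.G p y b w) :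
    Γ.IsJoin p y w :=
  ⟨(Γ.interval_subset_Icc hpb hw.2.2).1, (Γ.interval_subset_Icc hyb hw.2.1).1,
    fun _ hpt hyt => Γ.convex_setOf_ge _ p hpt y hyt hw.1⟩

lemma isMeet_of_forall_mem_interval (hap : Γ.le a p) (ham : Γ.le a m)
    (h : ∀ t ∈ Γ.Icc a p, a ∈ interval Γ.G m t) : Γ.IsMeet p m a := by
  refine ⟨hap, ham, fun x hxp hxm => ?_⟩
  obtain ⟨t, -, htap, htxp⟩ := Γ.modular x a p
  exact Γ.convex_setOf_le x m hxm t (Γ.interval_subset_Icc hxp htxp).1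
    (h t (Γ.interval_subset_Icc hap htap))

lemma isJoin_of_forall_mem_interval (hpb : Γ.le p b) (hmb : Γ.le m b)
    (h : ∀ t ∈ Γ.Icc p b, b ∈ interval Γ.G m t) : Γ.IsJoin p m b := by
  refine ⟨hpb, hmb, fun x hpx hmx => ?_⟩
  obtain ⟨t, htpb, -, htpx⟩ := Γ.modular p b x
  exact Γ.convex_setOf_ge x m hmx t (Γ.interval_subset_Icc hpx htpx).2
    (h t (Γ.interval_subset_Icc hpb htpb))

end ModularComplex

namespace ExtendedModularComplex

variable (Γ : ExtendedModularComplex V) {a b m p : V}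

lemma Icc_subset_Lneg (h : Γ.sq a p) : Γ.Icc a p ⊆ Γ.Lneg p :=
  fun _ ht => Γ.sq_interval h ht.2 ht ⟨Γ.sq_le h, Γ.le_refl p⟩

lemma Icc_subset_Lpos (h : Γ.sq p b) : Γ.Icc p b ⊆ Γ.Lpos p :=
  fun _ ht => Γ.sq_interval h ht.1 ⟨Γ.le_refl p, Γ.sq_le h⟩ ht

lemma sq_of_isMeet_of_isJoin (hap : Γ.sq a p) (hpb : Γ.sq p b) (hmeet : Γ.IsMeet p m a)
    (hjoin : Γ.IsJoin p m b) : Γ.sq a b := by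
  have ham := hmeet.2.1
  induction ham generalizing b with
  | refl =>
    obtain rfl : b = p := Γ.acyclic (hjoin.2.2 p (Γ.le_refl p) hmeet.1) hjoin.1
    exact hap
  | @tail y m hay hym ih =>
    have hym' := Γ.le_of_ori hym
    obtain ⟨w, hw⟩ := Γ.modular p y b
    have hpyw := Γ.isJoin_of_isMedian (Γ.sq_le hpb) (Γ.le_trans hym' hjoin.2.1) hw
    have hwb := (Γ.interval_subset_Icc (Γ.sq_le hpb) hw.2.2).2
    have hpya : Γ.IsMeet p y a :=
      ⟨hmeet.1, hay, fun t htp hty => hmeet.2.2 t htp (Γ.le_trans hty hym')⟩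
    have haw : Γ.sq a w := ih (Γ.Icc_subset_Lpos hpb ⟨hpyw.1, hwb⟩) hpya hpyw
    have hmwb : Γ.IsJoin m w b :=
      ⟨hjoin.2.1, hwb, fun t hmt hwt => hjoin.2.2 t (Γ.le_trans hpyw.1 hwt) hmt⟩
    have hyb : Γ.sq y b :=
      Γ.sq_join (Γ.sq_edge hym) (Γ.Icc_subset_Lneg haw ⟨hay, hpyw.2.1⟩) hmwb
    exact Γ.sq_meet hpb hyb hpya

end ExtendedModularComplex

/-- Properties of the operation `p ◇ q`: with `a` the gate of `q` at
`L^-_p`, `b` the gate of `q` at `L^+_p` and `m` a median of `a,b,q`, we have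
`p ∧ m = a`, `p ∨ m = b`, `a ⊑ b` (so `p, m` are ◇-neighbors), and `m ≠ p`
whenever `p ≠ q`. -/
theorem diamond_op_properties (Γ : ExtendedModularComplex V) (p q a b m : V)
    (ha : IsGate Γ.G (Γ.Lneg p) q a) (hb : IsGate Γ.G (Γ.Lpos p) q b)
    (hm : IsMedian Γ.G a b q m) :
    Γ.IsMeet p m a ∧ Γ.IsJoin p m b ∧ Γ.sq a b ∧ Γ.DiamondNb p m ∧
      (p ≠ q → m ≠ p) := by
  have hG := Γ.connected
  have hap := Γ.sq_le ha.1
  have hpb := Γ.sq_le hb.1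
  obtain ⟨ham, hmb⟩ := Γ.interval_subset_Icc (Γ.le_trans hap hpb) hm.1
  have hmeet := Γ.isMeet_of_forall_mem_interval hap ham fun t ht =>
    ha.mem_interval_of_mem_interval hG (Γ.Icc_subset_Lneg ha.1 ht) hm.2.2
  have hjoin := Γ.isJoin_of_forall_mem_interval hpb hmb fun t ht =>
    hb.mem_interval_of_mem_interval hG (Γ.Icc_subset_Lpos hb.1 ht) hm.2.1
  have hab := Γ.sq_of_isMeet_of_isJoin ha.1 hb.1 hmeet hjoin
  refine ⟨hmeet, hjoin, hab, ⟨a, b, hab, ⟨hap, hpb⟩, ⟨ham, hmb⟩⟩, fun hpq hmp => ?_⟩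
  subst hmp
  -- Then `m` is the gate of `q` at both `L^-_m` and `L^+_m`, yet the neighbour of `m` on a
  -- geodesic to `q` lies in one of them.
  obtain rfl := ha.eq_of_mem_interval hG (Γ.sq_refl m) hm.2.2
  obtain rfl := hb.eq_of_mem_interval hG (Γ.sq_refl m) hm.2.1
  obtain ⟨y, hmy, hy⟩ := exists_adj_mem_interval hG hpq
  rcases Γ.ori_total hmy with h | h
  · exact hmy.ne (hb.eq_of_mem_interval hG (Γ.sq_edge h) hy).symm
  · exact hmy.ne (ha.eq_of_mem_interval hG (Γ.sq_edge h) hy).symm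

end ZeroExt
end

section
/- Let (Γ,⊑) be an extended modular complex and p,q,x vertices with p,x ◇-neighbors. Let a be a gate of q at L^-_p, let b be a gate of q at L^+_p, and let m be a median of a,b,q. Then (x,m,q) is a shortest subpath. -/
namespace ZeroExt

variable {V : Type*}

variable [Fintype V]

/-!
Let `u ⊑ v` witness that `p` and `x` are ◇-neighbours. Then `u ∈ L⁻_p` and `v ∈ L⁺_p`, so
the gate property puts `m` on geodesics from `u` and from `v` to `q`, and it remains to see
that `{y | m ∈ I(y,q)}` is convex for `⪯`. Splitting a geodesic from `m` to `q` into edges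
reduces this to an edge `mq`, where the set is the half of the graph closer to `m` than to `q`.
Every edge `xy` with `x` closer to `m` and `y` closer to `q` is joined to `mq` by a ladder of
4-cycles (quadrangle condition), so admissibility orients it like `mq`; hence an ascending path
that leaves this half can never come back.
-/

section Metric

variable {α : Type*} {G : SimpleGraph α}

theorem _root_.SimpleGraph.Adj.dist_le_dist_add_one {v w : α} (h : G.Adj v w) (u : α) :
    G.dist w u ≤ G.dist v u + 1 := by
  rw [SimpleGraph.dist_comm, SimpleGraph.dist_comm (u := v)]
  simpa [SimpleGraph.dist_eq_one_iff_adj.2 h] using h.reachable.dist_triangle_right u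

theorem _root_.SimpleGraph.Connected.exists_adj_dist_add_one (hc : G.Connected) {u v : α}
    (huv : u ≠ v) :
    ∃ w, G.Adj u w ∧ G.dist w v + 1 = G.dist u v := by
  obtain ⟨p, hp⟩ := hc.exists_walk_length_eq_dist u v
  cases p with
  | nil => exact absurd rfl huv
  | @cons _ w _ hadj p =>
    refine ⟨w, hadj, le_antisymm ?_ (hadj.symm.dist_le_dist_add_one v)⟩
    simpa [← hp] using SimpleGraph.dist_le p

theorem mem_interval_iff {x y z : α} :
    z ∈ interval G x y ↔ G.dist x z + G.dist z y = G.dist x y := Iff.rfl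

theorem mem_interval_iff_of_mem_interval (hc : G.Connected) {m z q y : α}
    (hz : z ∈ interval G m q) :
    m ∈ interval G y q ↔ m ∈ interval G y z ∧ z ∈ interval G y q := by
  simp only [mem_interval_iff] at hz ⊢
  have := hc.dist_triangle (u := y) (v := m) (w := z)
  have := hc.dist_triangle (u := y) (v := z) (w := q)
  omega

theorem IsGate.mem_interval (hc : G.Connected) {U : Set α} {q g u m : α}
    (hg : IsGate G U q g) (hu : u ∈ U) (hm : m ∈ interval G g q) : m ∈ interval G u q := by
  simp only [mem_interval_iff] at hm ⊢
  have hgate := hg.2 u hu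
  have := SimpleGraph.dist_comm (G := G) (u := q) (v := u)
  have := SimpleGraph.dist_comm (G := G) (u := q) (v := g)
  have := SimpleGraph.dist_comm (G := G) (u := g) (v := u)
  have := hc.dist_triangle (u := u) (v := g) (w := m)
  have := hc.dist_triangle (u := u) (v := m) (w := q)
  omega

theorem Modular.mem_interval_or_mem_interval_s12 (hmod : Modular G) (hc : G.Connected) {m q : α}
    (hmq : G.Adj m q) (s : α) : m ∈ interval G s q ∨ q ∈ interval G s m := by
  obtain ⟨w, hsm, hmq', hsq⟩ := hmod s m q
  simp only [mem_interval_iff, SimpleGraph.dist_eq_one_iff_adj.2 hmq,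
    SimpleGraph.dist_eq_one_iff_adj.2 hmq.symm] at hsm hmq' hsq ⊢
  have hw : G.dist m w = 0 ∨ G.dist w q = 0 := by omega
  rcases hw with hw | hw
  · obtain rfl := hc.dist_eq_zero_iff.1 hw
    exact .inl (by simpa [SimpleGraph.dist_eq_one_iff_adj.2 hmq] using hsq)
  · obtain rfl := hc.dist_eq_zero_iff.1 hw
    exact .inr (by simpa [SimpleGraph.dist_eq_one_iff_adj.2 hmq.symm] using hsm)

theorem Modular.exists_adj_adj_dist_add_one (hmod : Modular G) (hc : G.Connected) {x y z s : α}
    (hzx : G.Adj z x) (hzy : G.Adj z y) (hxy : x ≠ y)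
    (hx : G.dist x s + 1 = G.dist z s) (hy : G.dist y s + 1 = G.dist z s) :
    ∃ w, G.Adj x w ∧ G.Adj w y ∧ G.dist w s + 1 = G.dist x s := by
  obtain ⟨w, hxyw, hysw, hxsw⟩ := hmod x y s
  simp only [mem_interval_iff] at hxyw hysw hxsw
  have hle : G.dist x y ≤ 2 := by
    have := hc.dist_triangle (u := x) (v := z) (w := y)
    rwa [SimpleGraph.dist_comm (u := x) (v := z), SimpleGraph.dist_eq_one_iff_adj.2 hzx,
      SimpleGraph.dist_eq_one_iff_adj.2 hzy] at this
  have hpos := hc.pos_dist_of_ne hxy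
  rw [SimpleGraph.dist_comm (u := y)] at hysw
  refine ⟨w, SimpleGraph.dist_eq_one_iff_adj.1 ?_, SimpleGraph.dist_eq_one_iff_adj.1 ?_, ?_⟩ <;>
    omega

end Metric

theorem _root_.Relation.ReflTransGen.exists_rel_of_not {β : Type*} {r : β → β → Prop}
    {P : β → Prop} {a b : β} (h : Relation.ReflTransGen r a b) (ha : P a) (hb : ¬P b) :
    ∃ c d, r c d ∧ P c ∧ ¬P d := by
  induction h with
  | refl => exact absurd ha hb
  | @tail c d _ hcd ih =>
    by_cases hc : P c
    · exact ⟨c, d, hcd, hc, hb⟩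
    · exact ih hc

namespace ModularComplex

variable (Γ : ModularComplex V)

theorem ori_asymm {x y : V} (h : Γ.ori x y) : ¬Γ.ori y x := fun h' =>
  (Γ.ori_adj h).ne (Γ.acyclic (.single h) (.single h'))

theorem ori_of_ori_of_mem_interval {m q x y : V} (hmq : Γ.ori m q) (hxy : Γ.G.Adj x y)
    (hx : m ∈ interval Γ.G x q) (hy : q ∈ interval Γ.G y m) : Γ.ori x y := by
  have hc := Γ.connected
  suffices H : ∀ k x y, Γ.G.Adj x y → Γ.G.dist x m = k → Γ.G.dist y q = k →
      Γ.G.dist x q = k + 1 → Γ.G.dist y m = k + 1 → Γ.ori x y by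
    rw [mem_interval_iff] at hx hy
    have := SimpleGraph.dist_eq_one_iff_adj.2 (Γ.ori_adj hmq)
    have := SimpleGraph.dist_comm (G := Γ.G) (u := m) (v := q)
    have := hxy.symm.dist_le_dist_add_one q
    have := hxy.dist_le_dist_add_one m
    exact H (Γ.G.dist x m) x y hxy rfl (by omega) (by omega) (by omega)
  intro k
  induction k with
  | zero =>
    intro x y _ hxm hyq _ _
    rwa [hc.dist_eq_zero_iff.1 hxm, hc.dist_eq_zero_iff.1 hyq]
  | succ k ih =>
    intro x y hxy hxm hyq hxq hym
    -- the next rung of the ladder: step from `x` towards `m`, then close a square over `y`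
    obtain ⟨x', hxx', hx'm⟩ := hc.exists_adj_dist_add_one (u := x) (v := m) (by
      rintro rfl
      simp at hxm)
    have hx'q : Γ.G.dist x' q = k + 1 := by
      have := hc.dist_triangle (u := x') (v := m) (w := q)
      have := SimpleGraph.dist_eq_one_iff_adj.2 (Γ.ori_adj hmq)
      have := hxx'.symm.dist_le_dist_add_one q
      omega
    have hx'y : x' ≠ y := by
      rintro rfl
      omega
    obtain ⟨y', hx'y', hy'y, hy'q⟩ :=
      Γ.modular.exists_adj_adj_dist_add_one (s := q) hc hxx' hxy hx'y (by omega) (by omega)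
    have hy'm : Γ.G.dist y' m = k + 1 := by
      have := hy'y.dist_le_dist_add_one m
      have := hx'y'.dist_le_dist_add_one m
      omega
    have hy'x : y' ≠ x := by
      rintro rfl
      omega
    have hcycle : IsFourCycle Γ.G x' y' y x := ⟨hx'y', hy'y, hxy.symm, hxx', hx'y, hy'x⟩
    exact Γ.admissible hcycle (ih x' y' hx'y' (by omega) (by omega) hx'q hy'm)

theorem ori_of_ori_of_mem_interval_of_adj {m q x y : V} (hmq : Γ.G.Adj m q) (hxy : Γ.ori x y)
    (hx : m ∈ interval Γ.G x q) (hy : q ∈ interval Γ.G y m) : Γ.ori m q :=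
  (Γ.ori_total hmq).resolve_right fun hqm =>
    Γ.ori_asymm hxy (Γ.ori_of_ori_of_mem_interval hqm (Γ.ori_adj hxy).symm hy hx)

theorem mem_interval_of_le_of_le_of_adj {m q u x v : V} (hmq : Γ.G.Adj m q)
    (hux : Γ.le u x) (hxv : Γ.le x v) (hu : m ∈ interval Γ.G u q)
    (hv : m ∈ interval Γ.G v q) : m ∈ interval Γ.G x q := by
  by_contra hx
  have hside (s : V) (hs : m ∉ interval Γ.G s q) : q ∈ interval Γ.G s m :=
    (Γ.modular.mem_interval_or_mem_interval_s12 Γ.connected hmq s).resolve_left hs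
  obtain ⟨c, d, hcd, hc, hd⟩ := Relation.ReflTransGen.exists_rel_of_not
    (P := fun s => m ∈ interval Γ.G s q) hux hu hx
  obtain ⟨c', d', hcd', hc', hd'⟩ := Relation.ReflTransGen.exists_rel_of_not
    (P := fun s => m ∉ interval Γ.G s q) hxv hx (not_not.2 hv)
  exact Γ.ori_asymm (Γ.ori_of_ori_of_mem_interval_of_adj hmq hcd hc (hside d hd))
    (Γ.ori_of_ori_of_mem_interval_of_adj hmq.symm hcd' (hside c' hc') (not_not.1 hd'))

theorem mem_interval_of_le_of_le {m q u x v : V} (hux : Γ.le u x) (hxv : Γ.le x v)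
    (hu : m ∈ interval Γ.G u q) (hv : m ∈ interval Γ.G v q) : m ∈ interval Γ.G x q := by
  have hc := Γ.connected
  induction h : Γ.G.dist m q generalizing m with
  | zero =>
    obtain rfl := hc.dist_eq_zero_iff.1 h
    simp [mem_interval_iff]
  | succ n ih =>
    obtain ⟨z, hmz, hzq⟩ := hc.exists_adj_dist_add_one (u := m) (v := q) (by
      rintro rfl
      simp at h)
    have hz : z ∈ interval Γ.G m q := by
      rw [mem_interval_iff, SimpleGraph.dist_eq_one_iff_adj.2 hmz]
      omega
    rw [mem_interval_iff_of_mem_interval hc hz] at hu hv ⊢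
    exact ⟨Γ.mem_interval_of_le_of_le_of_adj hmz hux hxv hu.1 hv.1, ih hu.2 hv.2 (by omega)⟩

end ModularComplex

/-- If `p, x` are ◇-neighbors then `(x, p ◇ q, q)` is a shortest
subpath, where `p ◇ q` is a median of the gates of `q` at `L^-_p` and `L^+_p`. -/
theorem diamond_shortest_of_diamondNb (Γ : ExtendedModularComplex V) (p q x a b m : V)
    (hx : Γ.DiamondNb p x)
    (ha : IsGate Γ.G (Γ.Lneg p) q a) (hb : IsGate Γ.G (Γ.Lpos p) q b)
    (hm : IsMedian Γ.G a b q m) :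
    ShortestTriple Γ.G x m q := by
  obtain ⟨u, v, huv, hpuv, hxuv⟩ := hx
  have hup : u ∈ Γ.Lneg p :=
    Γ.sq_interval huv hpuv.1 ⟨Relation.ReflTransGen.refl, Γ.sq_le huv⟩ hpuv
  have hpv : v ∈ Γ.Lpos p :=
    Γ.sq_interval huv hpuv.2 hpuv ⟨Γ.sq_le huv, Relation.ReflTransGen.refl⟩
  exact Γ.mem_interval_of_le_of_le hxuv.1 hxuv.2
    (ha.mem_interval Γ.connected hup hm.2.2) (hb.mem_interval Γ.connected hpv hm.2.1)

end ZeroExt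
end

section
/- Let (Γ,⊑) be an extended modular complex and p,u,q vertices. (i) If b is a gate of q at L^+_p and (p,b,u,q) is a shortest subpath, then b is a gate of u at L^+_p. (ii) If a is a gate of q at L^-_p and (p,a,u,q) is a shortest subpath, then a is a gate of u at L^-_p. (iii) If a is a gate of q at L^-_p, b is a gate of q at L^+_p, m is a median of a,b,q, and (p,m,u,q) is a shortest subpath, then a is a gate of u at L^-_p, b is a gate of u at L^+_p, and m is a median of a,b,u. -/
namespace ZeroExt

variable {V : Type*}

variable [Fintype V]

/-
Only the graph metric matters. If `g` is the gate of `q` at `U` and `u` lies on a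
geodesic from `g` to `q`, then for `x ∈ U` the triangle inequality through `u` squeezes
`d(u,x)` between `d(u,g) + d(g,x)` from both sides, so `g` is also the gate of `u`. In each part,
`(p, g, u, q)` being a shortest subpath puts `u` on a geodesic from the relevant gate to `q`; for
(iii), `u ∈ I(m,q)` together with `m ∈ I(a,q) ∩ I(b,q)` gives `u ∈ I(a,q) ∩ I(b,q)` and
`m ∈ I(a,u) ∩ I(b,u)`.
-/

section Geodesics

omit [Fintype V]

variable {G : SimpleGraph V} (hG : G.Connected)
include hG

theorem mem_interval_of_shortestQuad {p g u q : V} (h : ShortestQuad G p g u q) :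
    u ∈ interval G g q := by
  have := hG.dist_triangle (u := p) (v := g) (w := q)
  have := hG.dist_triangle (u := g) (v := u) (w := q)
  simp only [ShortestQuad] at h
  simp only [interval, Set.mem_ofPred_eq]
  omega

theorem mem_interval_trans {a m u q : V} (hm : m ∈ interval G a q) (hu : u ∈ interval G m q) :
    u ∈ interval G a q ∧ m ∈ interval G a u := by
  have := hG.dist_triangle (u := a) (v := m) (w := u)
  have := hG.dist_triangle (u := a) (v := u) (w := q)
  simp only [interval, Set.mem_ofPred_eq] at hm hu ⊢
  omega

theorem IsGate.of_mem_interval {U : Set V} {q g u : V} (hg : IsGate G U q g)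
    (hu : u ∈ interval G g q) : IsGate G U u g := by
  refine ⟨hg.1, fun x hx => le_antisymm hG.dist_triangle ?_⟩
  have hgate := hg.2 x hx
  have := hG.dist_triangle (u := q) (v := u) (w := x)
  have := G.dist_comm (u := q) (v := g)
  have := G.dist_comm (u := q) (v := u)
  have := G.dist_comm (u := u) (v := g)
  simp only [interval, Set.mem_ofPred_eq] at hu
  omega

end Geodesics

/-- The operations `▷, ◁, ◇` are preserved along shortest subpaths. -/
theorem diamond_ops_preserved (Γ : ExtendedModularComplex V) :
    (∀ p u q b : V, IsGate Γ.G (Γ.Lpos p) q b → ShortestQuad Γ.G p b u q →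
      IsGate Γ.G (Γ.Lpos p) u b) ∧
    (∀ p u q a : V, IsGate Γ.G (Γ.Lneg p) q a → ShortestQuad Γ.G p a u q →
      IsGate Γ.G (Γ.Lneg p) u a) ∧
    (∀ p u q a b m : V, IsGate Γ.G (Γ.Lneg p) q a → IsGate Γ.G (Γ.Lpos p) q b →
      IsMedian Γ.G a b q m → ShortestQuad Γ.G p m u q →
      IsGate Γ.G (Γ.Lneg p) u a ∧ IsGate Γ.G (Γ.Lpos p) u b ∧
        IsMedian Γ.G a b u m) := by
  have hG : Γ.G.Connected := Γ.connected
  refine ⟨fun p u q b hb hq => hb.of_mem_interval hG (mem_interval_of_shortestQuad hG hq),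
    fun p u q a ha hq => ha.of_mem_interval hG (mem_interval_of_shortestQuad hG hq),
    fun p u q a b m ha hb ⟨hmab, hmbq, hmaq⟩ hq => ?_⟩
  have hu := mem_interval_of_shortestQuad hG hq
  obtain ⟨hau, hmau⟩ := mem_interval_trans hG hmaq hu
  obtain ⟨hbu, hmbu⟩ := mem_interval_trans hG hmbq hu
  exact ⟨ha.of_mem_interval hG hau, hb.of_mem_interval hG hbu, hmab, hmbu, hmau⟩

end ZeroExt
end

section
/- Let (Γ,⊑) and (Γ',⊑') be extended modular complexes, and form their product: the digraph on pairs (p,p') of vertices with a directed edge (p,p')→(q,q') iff either p = q and p'→q' in Γ', or p' = q' and p→q in Γ; the induced partial order on the product is the componentwise order, the relation is (p,p') ⊑_× (q,q') iff p ⊑ q and p' ⊑' q', and product intervals are [(a,a'),(b,b')] = [a,b] × [a',b']. Then (x,x') and (y,y') are ◇-neighbors in the product iff x,y are ◇-neighbors in Γ and x',y' are ◇-neighbors in Γ'. Consequently, the thickening distance of the product satisfies d^◇((x,x'),(y,y')) = max( d^◇_Γ(x,y), d^◇_{Γ'}(x',y') ). -/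
namespace ZeroExt

variable {V : Type*}

variable [Fintype V]

variable {V' : Type*} [Fintype V']

/-- The componentwise order on the product. -/
def prodLe (Γ : ExtendedModularComplex V) (Γ' : ExtendedModularComplex V')
    (x y : V × V') : Prop :=
  Γ.le x.1 y.1 ∧ Γ'.le x.2 y.2

/-- The product relation `⊑_×`. -/
def prodSq (Γ : ExtendedModularComplex V) (Γ' : ExtendedModularComplex V')
    (x y : V × V') : Prop :=
  Γ.sq x.1 y.1 ∧ Γ'.sq x.2 y.2

/-- ◇-neighbors in the product. -/
def prodDiamondNb (Γ : ExtendedModularComplex V) (Γ' : ExtendedModularComplex V')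
    (p q : V × V') : Prop :=
  ∃ a b : V × V', prodSq Γ Γ' a b ∧
    (prodLe Γ Γ' a p ∧ prodLe Γ Γ' p b) ∧ (prodLe Γ Γ' a q ∧ prodLe Γ Γ' q b)

/-- The thickening of the product. -/
def prodThick (Γ : ExtendedModularComplex V) (Γ' : ExtendedModularComplex V') :
    SimpleGraph (V × V') where
  Adj p q := p ≠ q ∧ prodDiamondNb Γ Γ' p q
  symm := by
    constructor
    rintro p q ⟨hne, a, b, hab, hp, hq⟩
    exact ⟨hne.symm, a, b, hab, hq, hp⟩
  loopless := by constructor; rintro p ⟨hne, -⟩; exact hne rfl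

end ZeroExt

/-!
The product relation and the product order are componentwise, so ◇-neighbourhood in the product
is componentwise too. As ◇-neighbourhood is reflexive, the thickening of the product is therefore
the strong product of the two thickenings, and distances in a strong product are the maxima of the
component distances: projecting a walk onto a factor can only shorten it, and two geodesics of the
factors are run simultaneously, the shorter one waiting at its endpoint.
-/

namespace SimpleGraph

variable {α β : Type*}

def strongProd (G : SimpleGraph α) (H : SimpleGraph β) : SimpleGraph (α × β) where
  Adj x y := x ≠ y ∧ (x.1 = y.1 ∨ G.Adj x.1 y.1) ∧ (x.2 = y.2 ∨ H.Adj x.2 y.2)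
  symm := ⟨fun _ _ ⟨hne, h₁, h₂⟩ =>
    ⟨hne.symm, h₁.imp Eq.symm Adj.symm, h₂.imp Eq.symm Adj.symm⟩⟩
  loopless := ⟨fun _ h => h.1 rfl⟩

infixl:70 " ⊠ " => strongProd

variable {G : SimpleGraph α} {H : SimpleGraph β}

theorem boxProd_le_strongProd : G.boxProd H ≤ G ⊠ H := by
  rintro x y (⟨hG, h₂⟩ | ⟨hH, h₁⟩)
  · exact ⟨fun h => hG.ne (congrArg Prod.fst h), Or.inr hG, Or.inl h₂⟩
  · exact ⟨fun h => hH.ne (congrArg Prod.snd h), Or.inl h₁, Or.inr hH⟩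

theorem edist_apply_le_edist {f : α → β}
    (hf : ∀ ⦃x y⦄, G.Adj x y → f x = f y ∨ H.Adj (f x) (f y)) (u v : α) :
    H.edist (f u) (f v) ≤ G.edist u v := by
  refine le_iInf fun p => ?_
  induction p with
  | nil => simp
  | @cons u v w h p ih =>
    have hstep : H.edist (f u) (f v) ≤ 1 := by
      rcases hf h with heq | hadj
      · simp [heq]
      · exact (edist_eq_one_iff_adj.2 hadj).le
    calc H.edist (f u) (f w) ≤ H.edist (f u) (f v) + H.edist (f v) (f w) := H.edist_triangle
      _ ≤ 1 + p.length := add_le_add hstep ih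
      _ = (Walk.cons h p).length := by rw [Walk.length_cons]; push_cast; ring

theorem exists_walk_strongProd_length_eq_max :
    ∀ {a b : α} {c d : β} (p : G.Walk a b) (q : H.Walk c d),
      ∃ r : (G ⊠ H).Walk (a, c) (b, d), r.length = max p.length q.length
  | a, _, _, _, .nil, q =>
    ⟨(q.boxProdRight G a).mapLe boxProd_le_strongProd,
      (Walk.length_mapLe _ _).trans ((Walk.length_map _ _).trans (by simp))⟩
  | _, _, c, _, .cons hp p, .nil =>
    ⟨((Walk.cons hp p).boxProdLeft H c).mapLe boxProd_le_strongProd,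
      (Walk.length_mapLe _ _).trans ((Walk.length_map _ _).trans (by simp))⟩
  | _, _, _, _, .cons hp p, .cons hq q => by
    obtain ⟨r, hr⟩ := exists_walk_strongProd_length_eq_max p q
    refine ⟨.cons ⟨fun h => hp.ne (congrArg Prod.fst h), Or.inr hp, Or.inr hq⟩ r, ?_⟩
    change r.length + 1 = max (p.length + 1) (q.length + 1)
    rw [hr, Nat.add_max_add_right]

theorem edist_strongProd (x y : α × β) :
    (G ⊠ H).edist x y = max (G.edist x.1 y.1) (H.edist x.2 y.2) := by
  refine le_antisymm ?_ (max_le ?_ ?_)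
  · rcases eq_or_ne (G.edist x.1 y.1) ⊤ with hG | hG
    · simp [hG]
    rcases eq_or_ne (H.edist x.2 y.2) ⊤ with hH | hH
    · simp [hH]
    obtain ⟨p, hp⟩ := exists_walk_of_edist_ne_top hG
    obtain ⟨q, hq⟩ := exists_walk_of_edist_ne_top hH
    obtain ⟨r, hr⟩ := exists_walk_strongProd_length_eq_max p q
    calc (G ⊠ H).edist x y ≤ r.length := edist_le r
      _ = max (G.edist x.1 y.1) (H.edist x.2 y.2) := by
        rw [hr, ← hp, ← hq, Nat.mono_cast.map_max]
  · exact edist_apply_le_edist (G := G ⊠ H) (fun _ _ h => h.2.1) x y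
  · exact edist_apply_le_edist (G := G ⊠ H) (fun _ _ h => h.2.2) x y

theorem Reachable.dist_strongProd {x y : α × β} (hG : G.Reachable x.1 y.1)
    (hH : H.Reachable x.2 y.2) :
    (G ⊠ H).dist x y = max (G.dist x.1 y.1) (H.dist x.2 y.2) := by
  rw [dist, edist_strongProd, ← hG.coe_dist_eq_edist, ← hH.coe_dist_eq_edist,
    ← Nat.mono_cast.map_max, ENat.toNat_natCast]

end SimpleGraph

namespace ZeroExt

variable {V : Type*} [Fintype V] {V' : Type*} [Fintype V']

namespace ExtendedModularComplex

variable (Γ : ExtendedModularComplex V)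

theorem diamondNb_self (p : V) : Γ.DiamondNb p p :=
  ⟨p, p, Γ.sq_refl p, ⟨.refl, .refl⟩, ⟨.refl, .refl⟩⟩

theorem diamondNb_iff_eq_or_thick_adj {p q : V} : Γ.DiamondNb p q ↔ p = q ∨ Γ.thick.Adj p q :=
  ⟨fun h => (eq_or_ne p q).imp_right fun hne => ⟨hne, h⟩,
    by rintro (rfl | h); exacts [Γ.diamondNb_self p, h.2]⟩

theorem le_thick : Γ.G ≤ Γ.thick := by
  intro x y h
  refine ⟨h.ne, ?_⟩
  rcases Γ.ori_total h with hxy | hyx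
  · exact ⟨x, y, Γ.sq_edge hxy, ⟨.refl, .single hxy⟩, ⟨.single hxy, .refl⟩⟩
  · exact ⟨y, x, Γ.sq_edge hyx, ⟨.single hyx, .refl⟩, ⟨.refl, .single hyx⟩⟩

theorem thick_connected : Γ.thick.Connected :=
  Γ.connected.mono Γ.le_thick

end ExtendedModularComplex

section Product

variable (Γ : ExtendedModularComplex V) (Γ' : ExtendedModularComplex V')

theorem prodDiamondNb_iff (p q : V × V') :
    prodDiamondNb Γ Γ' p q ↔ Γ.DiamondNb p.1 q.1 ∧ Γ'.DiamondNb p.2 q.2 := by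
  constructor
  · rintro ⟨a, b, hab, ⟨hap, hpb⟩, ⟨haq, hqb⟩⟩
    exact ⟨⟨a.1, b.1, hab.1, ⟨hap.1, hpb.1⟩, ⟨haq.1, hqb.1⟩⟩,
      ⟨a.2, b.2, hab.2, ⟨hap.2, hpb.2⟩, ⟨haq.2, hqb.2⟩⟩⟩
  · rintro ⟨⟨a, b, hab, hp, hq⟩, ⟨a', b', hab', hp', hq'⟩⟩
    exact ⟨(a, a'), (b, b'), ⟨hab, hab'⟩,
      ⟨⟨hp.1, hp'.1⟩, ⟨hp.2, hp'.2⟩⟩, ⟨⟨hq.1, hq'.1⟩, ⟨hq.2, hq'.2⟩⟩⟩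

theorem prodThick_eq_strongProd : prodThick Γ Γ' = Γ.thick ⊠ Γ'.thick := by
  ext p q
  change p ≠ q ∧ prodDiamondNb Γ Γ' p q ↔ (Γ.thick ⊠ Γ'.thick).Adj p q
  rw [prodDiamondNb_iff, Γ.diamondNb_iff_eq_or_thick_adj, Γ'.diamondNb_iff_eq_or_thick_adj]
  rfl

end Product

/-- ◇-neighbors in a product are exactly componentwise ◇-neighbors,
and the thickening distance of the product is the max of the component thickening
distances. -/
theorem prod_diamondNb_and_dist (Γ : ExtendedModularComplex V)
    (Γ' : ExtendedModularComplex V') :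
    (∀ (x y : V) (x' y' : V'),
      prodDiamondNb Γ Γ' (x, x') (y, y') ↔ Γ.DiamondNb x y ∧ Γ'.DiamondNb x' y') ∧
    (∀ p q : V × V',
      (prodThick Γ Γ').dist p q =
        max (Γ.thick.dist p.1 q.1) (Γ'.thick.dist p.2 q.2)) := by
  refine ⟨fun x y x' y' => prodDiamondNb_iff Γ Γ' (x, x') (y, y'), fun p q => ?_⟩
  rw [prodThick_eq_strongProd]
  exact SimpleGraph.Reachable.dist_strongProd (Γ.thick_connected _ _) (Γ'.thick_connected _ _)

end ZeroExt
end

section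
/- Let (V,μ) be a finite metric space whose metric μ is modular, and let E be the edge set of the underlying graph H_μ. Suppose a,b,c,d are four distinct points such that {a,b}, {b,d}, {d,c}, {c,a} ∈ E (i.e., (a,b,d,c) is a 4-cycle of H_μ). Then μ(a,c) + μ(b,d) < μ(a,d) + μ(b,c). -/
namespace ZeroExt

/-- A metric is modular: every triple of points has a median. -/
def MetricModular (V : Type*) [MetricSpace V] : Prop :=
  ∀ x y z : V, ∃ m : V, dist x m + dist m y = dist x y ∧
    dist y m + dist m z = dist y z ∧ dist x m + dist m z = dist x z

/-- `{x,y}` is an edge of the underlying graph `H_μ` of the metric space. -/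
def MetricEdge (V : Type*) [MetricSpace V] (x y : V) : Prop :=
  x ≠ y ∧ ∀ z : V, z ≠ x → z ≠ y → dist x y < dist x z + dist z y

lemma MetricEdge.symm' {V : Type*} [MetricSpace V] {x y : V} (h : MetricEdge V x y) :
    MetricEdge V y x := by
  refine ⟨h.1.symm, fun z hz1 hz2 => ?_⟩
  have := h.2 z hz2 hz1
  rw [dist_comm y x, dist_comm y z, dist_comm z x]
  linarith

lemma edge_concat {V : Type*} [MetricSpace V] (hmod : MetricModular V) {x y z : V}
    (hxz : x ≠ z) (e1 : MetricEdge V x y) (e2 : MetricEdge V y z) :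
    dist x y + dist y z = dist x z := by
  obtain ⟨m, h1, h2, h3⟩ := hmod x y z
  have hm1 : m = x ∨ m = y := by
    by_contra h
    push_neg at h
    have := e1.2 m h.1 h.2
    linarith
  have hm2 : m = y ∨ m = z := by
    by_contra h
    push_neg at h
    have := e2.2 m h.1 h.2
    linarith
  have hmy : m = y := by
    rcases hm1 with rfl | rfl
    · rcases hm2 with h | h
      · exact h
      · exact absurd h hxz
    · rfl
  subst hmy
  exact h3

/-- In a finite modular metric space, a 4-cycle `(a,b,d,c)` of the
underlying graph `H_μ` satisfies `μ(a,c) + μ(b,d) < μ(a,d) + μ(b,c)`. -/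
theorem fourCycle_strict_submodular {V : Type*} [Fintype V] [MetricSpace V]
    (hmod : MetricModular V) (a b c d : V)
    (hab : a ≠ b) (hac : a ≠ c) (had : a ≠ d) (hbc : b ≠ c) (hbd : b ≠ d)
    (hcd : c ≠ d)
    (eab : MetricEdge V a b) (ebd : MetricEdge V b d) (edc : MetricEdge V d c)
    (eca : MetricEdge V c a) :
    dist a c + dist b d < dist a d + dist b c := by
  have h1 : dist a b + dist b d = dist a d := edge_concat hmod had eab ebd
  have h2 : dist b a + dist a c = dist b c := edge_concat hmod hbc eab.symm' eca.symm'
  have hpos : 0 < dist a b := dist_pos.2 hab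
  rw [dist_comm b a] at h2
  linarith

end ZeroExt
end

section
/- Let (V,μ) be a finite metric space whose metric μ is modular, and let E be the edge set of the underlying graph H_μ. Suppose {a,b} ∈ E and c,d ∈ V satisfy μ(c,d) = μ(c,a) + μ(a,b) + μ(b,d) (i.e., (c,a,b,d) is a shortest subpath with respect to μ). Then μ(a,c) + μ(b,d) < μ(b,c) + μ(a,d). -/
namespace ZeroExt

/-- In a finite modular metric space, if `{a,b}` is an edge of `H_μ`
and `(c,a,b,d)` is a shortest subpath with respect to `μ`, then
`μ(a,c) + μ(b,d) < μ(b,c) + μ(a,d)`. -/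
theorem edge_shortest_strict_submodular {V : Type*} [Fintype V] [MetricSpace V]
    (hmod : MetricModular V) (a b c d : V)
    (eab : MetricEdge V a b)
    (hshort : dist c d = dist c a + dist a b + dist b d) :
    dist a c + dist b d < dist b c + dist a d := by
  obtain ⟨hne, hedge⟩ := eab
  have hab : 0 < dist a b := dist_pos.mpr hne
  obtain ⟨m, hm1, hm2, hm3⟩ := hmod a b c
  obtain ⟨n, hn1, hn2, hn3⟩ := hmod a b d
  have hm : m = a ∨ m = b := by
    by_contra h
    push_neg at h
    have := hedge m h.1 h.2
    linarith
  have hn : n = a ∨ n = b := by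
    by_contra h
    push_neg at h
    have := hedge n h.1 h.2
    linarith
  have tcd : dist c d ≤ dist c a + dist a d := dist_triangle c a d
  have tcbd : dist c d ≤ dist c b + dist b d := dist_triangle c b d
  have e1 : dist c a = dist a c := dist_comm c a
  have e2 : dist c b = dist b c := dist_comm c b
  have e3 : dist b a = dist a b := dist_comm b a
  rcases hm with h | h <;> rcases hn with h' | h' <;>
      rw [h] at hm2 hm3 <;> rw [h'] at hn2 hn3
  · -- m = a, n = a
    -- hm2 : dist b a + dist a c = dist b c, hn2 : dist b a + dist a d = dist b d
    linarith
  · -- m = a, n = b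
    -- hm2 : dist b a + dist a c = dist b c, hn3 : dist a b + dist b d = dist a d
    linarith
  · -- m = b, n = a
    -- hm3 : dist a b + dist b c = dist a c, hn2 : dist b a + dist a d = dist b d
    linarith
  · -- m = b, n = b
    -- hm3 : dist a b + dist b c = dist a c, hn3 : dist a b + dist b d = dist a d
    linarith

end ZeroExt
end
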